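/- Let 0 < δ < 1 and 0 < σ < 1/2, and let p, q, ℓ be natural numbers with p ≤ (1/40)δ^{σ-1}, q ≤ (1/80)δ^{2σ-1} and 1 ≤ ℓ ≤ δ^{-σ}. Set s = pδ^{-σ} and t = 2qδ^{-2σ}, and let ξ = ℓδ^σ + ε with |ε| ≤ δ. Then the integer m = pℓ - qℓ² satisfies |sξ - tξ²/2 - m| ≤ 3/40; in particular the distance from the phase sξ - tξ²/2 to the nearest integer is at most 1/10. -/
import Mathlib


open Real

set_option maxHeartbeats 1000000

/-- With `s = pδ^{-σ}`, `t = 2qδ^{-2σ}` and `ξ = ℓδ^σ + ε` as in the paper,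
the integer `m = pℓ - qℓ²` satisfies `|sξ - tξ²/2 - m| ≤ 3/40`; in particular the distance
from the phase `sξ - tξ²/2` to the nearest integer is at most `1/10`. -/
theorem stmt2 (δ σ : ℝ) (hδ0 : 0 < δ) (hδ1 : δ < 1) (hσ0 : 0 < σ) (hσ1 : σ < 1/2)
    (p q ℓ : ℕ) (hp : (p : ℝ) ≤ (1/40) * δ ^ (σ - 1)) (hq : (q : ℝ) ≤ (1/80) * δ ^ (2*σ - 1))
    (hℓ1 : 1 ≤ ℓ) (hℓ2 : (ℓ : ℝ) ≤ δ ^ (-σ))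
    (s t ξ ε : ℝ) (hs : s = (p : ℝ) * δ ^ (-σ)) (ht : t = 2 * (q : ℝ) * δ ^ (-(2*σ)))
    (hξ : ξ = (ℓ : ℝ) * δ ^ σ + ε) (hε : |ε| ≤ δ) :
    |s * ξ - t * ξ ^ 2 / 2 - (((p * ℓ : ℕ) : ℤ) - ((q * ℓ ^ 2 : ℕ) : ℤ) : ℝ)| ≤ 3/40 ∧
    ∃ m : ℤ, |s * ξ - t * ξ ^ 2 / 2 - (m : ℝ)| ≤ 1/10 := by
  set A := δ ^ σ with hA
  set B := δ ^ (-σ) with hB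
  have hBpos : 0 < B := rpow_pos_of_pos hδ0 _
  have hAB : A * B = 1 := by
    rw [hA, hB, ← rpow_add hδ0]; simp
  have hB2 : δ ^ (-(2*σ)) = B ^ 2 := by
    rw [hB, ← rpow_natCast (δ ^ (-σ)) 2, ← rpow_mul hδ0.le]
    congr 1; push_cast; ring
  have key : s * ξ - t * ξ ^ 2 / 2 - (((p * ℓ : ℕ) : ℤ) - ((q * ℓ ^ 2 : ℕ) : ℤ) : ℝ)
      = (p : ℝ) * B * ε - 2 * (q : ℝ) * ℓ * B * ε - (q : ℝ) * B ^ 2 * ε ^ 2 := by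
    subst hs ht hξ
    rw [hB2]
    push_cast
    linear_combination ((p:ℝ)*ℓ - (q:ℝ)*ℓ^2*(A*B+1) - 2*(q:ℝ)*ℓ*B*ε) * hAB
  have e1 : δ ^ (σ - 1) * B * δ = 1 := by
    rw [hB, ← rpow_add hδ0, show σ - 1 + -σ = (-1 : ℝ) by ring, rpow_neg_one]
    field_simp
  have e2 : δ ^ (2*σ - 1) * B * B * δ = 1 := by
    rw [hB, ← rpow_add hδ0, ← rpow_add hδ0,
      show 2*σ - 1 + -σ + -σ = (-1 : ℝ) by ring, rpow_neg_one]
    field_simp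
  have e3 : δ ^ (2*σ - 1) * B ^ 2 * δ ^ 2 = δ := by
    have : δ ^ (2*σ - 1) * B ^ 2 * δ ^ 2 = (δ ^ (2*σ - 1) * B * B * δ) * δ := by ring
    rw [this, e2, one_mul]
  have hεabs : 0 ≤ |ε| := abs_nonneg ε
  have h1 : |(p : ℝ) * B * ε| ≤ 1/40 := by
    rw [abs_mul, abs_of_nonneg (by positivity : (0:ℝ) ≤ (p:ℝ) * B)]
    calc (p : ℝ) * B * |ε| ≤ ((1/40) * δ ^ (σ - 1)) * B * δ := by
          gcongr
      _ = (1/40) * (δ ^ (σ - 1) * B * δ) := by ring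
      _ = 1/40 := by rw [e1]; ring
  have h2 : |2 * (q : ℝ) * ℓ * B * ε| ≤ 1/40 := by
    rw [abs_mul, abs_of_nonneg (by positivity : (0:ℝ) ≤ 2 * (q:ℝ) * ℓ * B)]
    calc 2 * (q : ℝ) * ℓ * B * |ε| ≤ 2 * ((1/80) * δ ^ (2*σ - 1)) * B * B * δ := by
          gcongr
      _ = (1/40) * (δ ^ (2*σ - 1) * B * B * δ) := by ring
      _ = 1/40 := by rw [e2]; ring
  have hε2 : ε ^ 2 ≤ δ ^ 2 := by
    have h := abs_le.1 hε
    nlinarith [h.1, h.2]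
  have h3 : |(q : ℝ) * B ^ 2 * ε ^ 2| ≤ 1/80 := by
    rw [abs_of_nonneg (by positivity : (0:ℝ) ≤ (q:ℝ) * B ^ 2 * ε ^ 2)]
    calc (q : ℝ) * B ^ 2 * ε ^ 2 ≤ ((1/80) * δ ^ (2*σ - 1)) * B ^ 2 * δ ^ 2 := by
          gcongr
      _ = (1/80) * (δ ^ (2*σ - 1) * B ^ 2 * δ ^ 2) := by ring
      _ = (1/80) * δ := by rw [e3]
      _ ≤ 1/80 := by nlinarith
  have main : |s * ξ - t * ξ ^ 2 / 2 - (((p * ℓ : ℕ) : ℤ) - ((q * ℓ ^ 2 : ℕ) : ℤ) : ℝ)| ≤ 3/40 := by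
    rw [key]
    have t1 : |(p : ℝ) * B * ε - 2 * (q : ℝ) * ℓ * B * ε - (q : ℝ) * B ^ 2 * ε ^ 2|
        ≤ |(p : ℝ) * B * ε - 2 * (q : ℝ) * ℓ * B * ε| + |(q : ℝ) * B ^ 2 * ε ^ 2| :=
      abs_sub _ _
    have t2 : |(p : ℝ) * B * ε - 2 * (q : ℝ) * ℓ * B * ε|
        ≤ |(p : ℝ) * B * ε| + |2 * (q : ℝ) * ℓ * B * ε| := abs_sub _ _
    linarith
  refine ⟨main, ⟨((p * ℓ : ℕ) : ℤ) - ((q * ℓ ^ 2 : ℕ) : ℤ), ?_⟩⟩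
  push_cast at main ⊢
  linarith
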